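/- Let α : ℝ² → (0,∞) be C² and ℤ²-periodic, and let r : ℝ² → (0,∞) be C² and ℤ²-periodic with −∂²_{y₁} r(y) − ∂²_{y₂}(α(y) r(y)) = 0 for all y ∈ ℝ². If ∂_{y₁} r ≡ 0 on ℝ², then ∂_{y₁}∂_{y₂}(log α) ≡ 0 on ℝ². -/

import Mathlib

/-!
Since `r` does not depend on `y₁`, the equation reduces to `∂²_{y₂}(α r) = 0`; a periodic function
that is affine along every line in the `y₂`-direction is constant along it, so `∂_{y₂}(α r) = 0`.
Hence `∂_{y₂} log α = -∂_{y₂} log r`, and `∂_{y₁}∂_{y₂} log r = ∂_{y₂}∂_{y₁} log r = 0`.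
-/

open MeasureTheory

/-- The unit cube `[0,1]^n` in `ℝ^n`. -/
def unitCube (n : ℕ) : Set (Fin n → ℝ) := Set.Icc 0 1

/-- Partial derivative `∂_{y_i} f`. -/
noncomputable def pd {n : ℕ} (f : (Fin n → ℝ) → ℝ) (i : Fin n) : (Fin n → ℝ) → ℝ :=
  fun y => fderiv ℝ f y (Pi.single i 1)

/-- Second partial derivative `∂_{y_i} ∂_{y_j} f`. -/
noncomputable def pd2 {n : ℕ} (f : (Fin n → ℝ) → ℝ) (i j : Fin n) : (Fin n → ℝ) → ℝ :=
  pd (pd f j) i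

/-- Third partial derivative `∂_{y_i} ∂_{y_j} ∂_{y_k} f`. -/
noncomputable def pd3 {n : ℕ} (f : (Fin n → ℝ) → ℝ) (i j k : Fin n) : (Fin n → ℝ) → ℝ :=
  pd (pd (pd f k) j) i

/-- `ℤ^n`-periodicity. -/
def ZPeriodic {n : ℕ} (f : (Fin n → ℝ) → ℝ) : Prop :=
  ∀ (y : Fin n → ℝ) (z : Fin n → ℤ), f (y + fun i => (z i : ℝ)) = f y

/-- Admissible matrix field: C², periodic, symmetric, uniformly elliptic. -/
def IsAdmissible {n : ℕ} (a : Fin n → Fin n → (Fin n → ℝ) → ℝ) : Prop :=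
  (∀ i j, ContDiff ℝ 2 (a i j)) ∧
  (∀ i j, ZPeriodic (a i j)) ∧
  (∀ i j y, a i j y = a j i y) ∧
  ∃ lam Lam : ℝ, 0 < lam ∧ lam ≤ Lam ∧
    ∀ (y ξ : Fin n → ℝ),
      lam * (∑ i, ξ i ^ 2) ≤ ∑ i, ∑ j, a i j y * ξ i * ξ j ∧
      ∑ i, ∑ j, a i j y * ξ i * ξ j ≤ Lam * (∑ i, ξ i ^ 2)

/-- Corrector pair `(v^{kl}, ā_{kl})`. -/
def IsCorrector {n : ℕ} (a : Fin n → Fin n → (Fin n → ℝ) → ℝ)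
    (k l : Fin n) (v : (Fin n → ℝ) → ℝ) (abar : ℝ) : Prop :=
  ContDiff ℝ 2 v ∧ ZPeriodic v ∧
  ∀ y, -(∑ i, ∑ j, a i j y * pd2 v i j y) - a k l y = -abar

/-- Invariant measure for the matrix field `a`. -/
def IsInvariantMeasure {n : ℕ} (a : Fin n → Fin n → (Fin n → ℝ) → ℝ)
    (r : (Fin n → ℝ) → ℝ) : Prop :=
  ContDiff ℝ 2 r ∧ ZPeriodic r ∧ (∀ y, 0 < r y) ∧
  (∀ y, ∑ i, ∑ j, pd2 (fun x => a i j x * r x) i j y = 0) ∧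
  ∫ y in unitCube n, r y = 1

/-- `u` is Cᵐ on a neighborhood of the closure of `U`, with all partial
derivatives up to order `m` bounded there. -/
def SmoothBounded {n : ℕ} (m : ℕ) (U : Set (Fin n → ℝ)) (u : (Fin n → ℝ) → ℝ) : Prop :=
  ∃ V : Set (Fin n → ℝ), IsOpen V ∧ closure U ⊆ V ∧ ContDiffOn ℝ m u V ∧
    ∀ k : ℕ, k ≤ m → ∃ M : ℝ, ∀ x ∈ V, ‖iteratedFDerivWithin ℝ k u V x‖ ≤ M

open Real

theorem eq_zero_of_hasDerivAt_of_hasDerivAt_zero {g g' : ℝ → ℝ}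
    (hg : ∀ t, HasDerivAt g (g' t) t) (hg' : ∀ t, HasDerivAt g' 0 t) (h01 : g 0 = g 1)
    (t : ℝ) : g' t = 0 := by
  obtain ⟨c, -, hc⟩ := exists_hasDerivAt_eq_zero zero_lt_one
    (fun s _ => (hg s).continuousAt.continuousWithinAt) h01 (fun s _ => hg s)
  rw [is_const_of_deriv_eq_zero (fun s => (hg' s).differentiableAt) (fun s => (hg' s).deriv) t c,
    hc]

theorem ZPeriodic.mul {n : ℕ} {f g : (Fin n → ℝ) → ℝ} (hf : ZPeriodic f) (hg : ZPeriodic g) :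
    ZPeriodic (fun x => f x * g x) := fun y z => by
  simp only [hf y z, hg y z]

theorem ZPeriodic.add_single {n : ℕ} {f : (Fin n → ℝ) → ℝ} (hf : ZPeriodic f) (i : Fin n)
    (y : Fin n → ℝ) : f (y + Pi.single i 1) = f y := by
  convert hf y (Pi.single i 1) using 3
  ext k
  by_cases hk : k = i <;> simp [hk]

section PartialDerivatives

variable {n : ℕ} {f g : (Fin n → ℝ) → ℝ} {i j : Fin n} {y : Fin n → ℝ}

theorem hasDerivAt_pd_line {t : ℝ} (hf : DifferentiableAt ℝ f (y + t • Pi.single i 1)) :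
    HasDerivAt (fun s : ℝ => f (y + s • Pi.single i 1)) (pd f i (y + t • Pi.single i 1)) t := by
  have hline : HasDerivAt (fun s : ℝ => y + s • Pi.single i (1 : ℝ)) (Pi.single i 1) t := by
    simpa using ((hasDerivAt_id t).smul_const (Pi.single i (1 : ℝ))).const_add y
  exact hf.hasFDerivAt.comp_hasDerivAt t hline

theorem pd_neg (f : (Fin n → ℝ) → ℝ) (i : Fin n) (y : Fin n → ℝ) :
    pd (fun x => -f x) i y = -pd f i y := by
  simp [pd, fderiv_fun_neg]

theorem pd_mul (hf : DifferentiableAt ℝ f y) (hg : DifferentiableAt ℝ g y) :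
    pd (fun x => f x * g x) i y = f y * pd g i y + g y * pd f i y := by
  simp [pd, fderiv_fun_mul hf hg]

theorem pd_log (hf : DifferentiableAt ℝ f y) (hy : f y ≠ 0) :
    pd (fun x => log (f x)) i y = pd f i y / f y := by
  simp [pd, (hf.hasFDerivAt.log hy).fderiv, div_eq_inv_mul]

theorem pd_log_mul (hf : DifferentiableAt ℝ f y) (hg : DifferentiableAt ℝ g y) (hfy : f y ≠ 0)
    (hgy : g y ≠ 0) :
    pd (fun x => log (f x * g x)) i y =
      pd (fun x => log (f x)) i y + pd (fun x => log (g x)) i y := by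
  rw [pd_log (hf.fun_mul hg) (mul_ne_zero hfy hgy), pd_mul hf hg, pd_log hf hfy, pd_log hg hgy]
  field_simp
  ring

theorem pd2_eq_zero_of_pd_eq_zero (h : ∀ x, pd f j x = 0) (i : Fin n) (y : Fin n → ℝ) :
    pd2 f i j y = 0 := by
  simp [pd2, funext h, pd]

theorem pd2_comm (hf : ContDiff ℝ 2 f) (i j : Fin n) (y : Fin n → ℝ) :
    pd2 f i j y = pd2 f j i y := by
  have hd : Differentiable ℝ (fderiv ℝ f) :=
    (hf.fderiv_right (m := 1) le_rfl).differentiable one_ne_zero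
  have hsnd (k l : Fin n) :
      pd2 f k l y = fderiv ℝ (fderiv ℝ f) y (Pi.single k 1) (Pi.single l 1) := by
    change fderiv ℝ (fun x => fderiv ℝ f x (Pi.single l 1)) y (Pi.single k 1) = _
    rw [fderiv_clm_apply (hd y) (differentiableAt_const _)]
    simp
  rw [hsnd, hsnd]
  exact hf.contDiffAt.isSymmSndFDerivAt (by simp) _ _

theorem ZPeriodic.pd_eq_zero_of_pd2_eq_zero (hper : ZPeriodic f) (hf : ContDiff ℝ 2 f)
    (h : ∀ x, pd2 f i i x = 0) (y : Fin n → ℝ) : pd f i y = 0 := by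
  have hpd : Differentiable ℝ (pd f i) :=
    ((hf.fderiv_right (m := 1) le_rfl).clm_apply contDiff_const).differentiable one_ne_zero
  have hline := eq_zero_of_hasDerivAt_of_hasDerivAt_zero
    (fun t => hasDerivAt_pd_line (y := y) (hf.differentiable two_ne_zero _))
    (fun t => by convert hasDerivAt_pd_line (hpd _) using 1; exact (h _).symm)
    (by simp [hper.add_single]) 0
  simpa using hline

end PartialDerivatives

/-- if the invariant measure of `diag(1, α)` in 2d does not
depend on `y₁`, then `(log α)_{y₁ y₂} ≡ 0`. -/
theorem log_alpha_mixed_deriv_zero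
    (α : (Fin 2 → ℝ) → ℝ) (hαC : ContDiff ℝ 2 α) (hαper : ZPeriodic α)
    (hαpos : ∀ y, 0 < α y)
    (r : (Fin 2 → ℝ) → ℝ) (hrC : ContDiff ℝ 2 r) (hrper : ZPeriodic r)
    (hrpos : ∀ y, 0 < r y)
    (hpde : ∀ y, -(pd2 r 0 0 y) - pd2 (fun x => α x * r x) 1 1 y = 0)
    (hr1 : ∀ y, pd r 0 y = 0) :
    ∀ y, pd2 (fun x => Real.log (α x)) 0 1 y = 0 := by
  have hαd := hαC.differentiable two_ne_zero
  have hrd := hrC.differentiable two_ne_zero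
  have hαr1 : ∀ x, pd (fun x => α x * r x) 1 x = 0 :=
    (hαper.mul hrper).pd_eq_zero_of_pd2_eq_zero (hαC.mul hrC) fun x => by
      linarith [hpde x, pd2_eq_zero_of_pd_eq_zero hr1 0 x]
  have hlogα1 : pd (fun x => log (α x)) 1 = pd (fun x => -log (r x)) 1 := funext fun x => by
    have hsum := pd_log_mul (i := 1) (hαd x) (hrd x) (hαpos x).ne' (hrpos x).ne'
    rw [pd_log ((hαd x).fun_mul (hrd x)) (mul_pos (hαpos x) (hrpos x)).ne', hαr1,
      zero_div] at hsum
    rw [pd_neg]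
    linarith
  have hlogr0 (x : Fin 2 → ℝ) : pd (fun x => -log (r x)) 0 x = 0 := by
    rw [pd_neg, pd_log (hrd x) (hrpos x).ne', hr1, zero_div, neg_zero]
  intro y
  rw [pd2, hlogα1, ← pd2, pd2_comm ((hrC.log fun x => (hrpos x).ne').neg)]
  exact pd2_eq_zero_of_pd_eq_zero hlogr0 1 y
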